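/- Every Lagrangian of V lies in the SL(2,ℂ)-orbit of exactly one of the three Lagrangians span{X³, X²Y}, span{X³, XY²}, span{X²Y, X³ + Y³}; that is, these three orbits are pairwise disjoint and their union is the set of all Lagrangians of V. -/

import Mathlib

noncomputable section

open MvPolynomial

/-- The polynomial ring `ℂ[X,Y]`. -/
abbrev P2 : Type := MvPolynomial (Fin 2) ℂ

/-- The variable `X`. -/
def Xv : P2 := X 0

/-- The variable `Y`. -/
def Yv : P2 := X 1

/-- `V`: the space of homogeneous cubic polynomials in `X, Y`. -/
def Vcubic : Submodule ℂ P2 := homogeneousSubmodule (Fin 2) ℂ 3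

/-- The coefficient of `X^i Y^j`. -/
def cf (i j : ℕ) (p : P2) : ℂ := coeff (Finsupp.single 0 i + Finsupp.single 1 j) p

/-- The alternating bilinear form `ω` with `ω(X³,Y³) = 1`, `ω(X²Y,XY²) = -1/3`,
all other pairings of distinct basis vectors being `0`. -/
def omegaForm (p q : P2) : ℂ :=
  cf 3 0 p * cf 0 3 q - cf 0 3 p * cf 3 0 q
    - (1 / 3) * (cf 2 1 p * cf 1 2 q - cf 1 2 p * cf 2 1 q)

/-- The linear form `b X - a Y` associated to the point `[a : b] ∈ ℂℙ¹`. -/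
def lf (a b : ℂ) : P2 := C b * Xv - C a * Yv

/-- A Lagrangian of `V`: a 2-dimensional subspace contained in `V` on which `ω` vanishes. -/
def IsLagrangian (W : Submodule ℂ P2) : Prop :=
  W ≤ Vcubic ∧ Module.finrank ℂ W = 2 ∧ ∀ p ∈ W, ∀ q ∈ W, omegaForm p q = 0

/-- A perfect cube: a nonzero element of the form `c • (bX - aY)³`. -/
def IsPerfectCube (p : P2) : Prop :=
  ∃ c a b : ℂ, c ≠ 0 ∧ (a ≠ 0 ∨ b ≠ 0) ∧ p = C c * lf a b ^ 3

/-- The action of `SL(2,ℂ)` on `ℂ[X,Y]` by linear substitution of the variables. -/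
def subst (g : Matrix.SpecialLinearGroup (Fin 2) ℂ) : P2 →ₐ[ℂ] P2 :=
  aeval (fun i => C (g.1 i 0) * Xv + C (g.1 i 1) * Yv)

/-- The induced action of `SL(2,ℂ)` on subspaces of `ℂ[X,Y]`. -/
def mapAct (g : Matrix.SpecialLinearGroup (Fin 2) ℂ) (W : Submodule ℂ P2) :
    Submodule ℂ P2 :=
  W.map (subst g).toLinearMap

/-- The `SL(2,ℂ)`-orbit of a subspace. -/
def slOrbit (W₀ : Submodule ℂ P2) : Set (Submodule ℂ P2) := {W | ∃ g, W = mapAct g W₀}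

/-- The Lagrangian `span{X³, X²Y}`. -/
def L₁ : Submodule ℂ P2 := Submodule.span ℂ {Xv ^ 3, Xv ^ 2 * Yv}

/-- The Lagrangian `span{X³, XY²}`. -/
def L₂ : Submodule ℂ P2 := Submodule.span ℂ {Xv ^ 3, Xv * Yv ^ 2}

/-- The Lagrangian `span{X²Y, X³ + Y³}`. -/
def L₃ : Submodule ℂ P2 := Submodule.span ℂ {Xv ^ 2 * Yv, Xv ^ 3 + Yv ^ 3}

/-!
`SL(2, ℂ)` scales `ω` by `det³` and the discriminant of a binary cubic by `det⁶`, so it preserves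
both, and the three orbits consist of Lagrangians. Conversely let `W` be a Lagrangian. If `W`
contains a perfect cube, move it to `X³`; isotropy forces `W = span{X³, b₁X²Y + b₂XY²}`, which is
`L₁` if `b₂ = 0` and is the image of `L₂` under `X ↦ X, Y ↦ sX + Y` otherwise. If `W` contains no
perfect cube, the discriminant restricted to the pencil `W` is a binary quartic, so it vanishes at
some `r ≠ 0`; then `r = c ℓ₁² ℓ₂` with independent linear forms `ℓ₁, ℓ₂`. Moving `r` to `X²Y`,
isotropy gives `W = span{X²Y, u₀X³ + u₃Y³}` with `u₀ u₃ ≠ 0` (otherwise `W` contains a cube), and a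
diagonal substitution carries `L₃` to it. The orbits are separated by two invariants: `L₁` and `L₂`
contain the cube `X³` while `L₃` contains none, and the discriminant vanishes on all of `L₁` but not
on `X³ + XY² ∈ L₂`.
-/

open scoped MatrixGroups

section Coordinates

def cubic (a₀ a₁ a₂ a₃ : ℂ) : P2 :=
  C a₀ * Xv ^ 3 + C a₁ * (Xv ^ 2 * Yv) + C a₂ * (Xv * Yv ^ 2) + C a₃ * Yv ^ 3

abbrev expXY (i j : ℕ) : Fin 2 →₀ ℕ := Finsupp.single 0 i + Finsupp.single 1 j

lemma expXY_inj {i j k l : ℕ} : expXY i j = expXY k l ↔ i = k ∧ j = l := by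
  simp [Finsupp.ext_iff, Fin.forall_fin_two]

lemma eq_expXY (d : Fin 2 →₀ ℕ) : d = expXY (d 0) (d 1) := by
  ext i; fin_cases i <;> simp

lemma Xv_pow_mul_Yv_pow (i j : ℕ) : Xv ^ i * Yv ^ j = monomial (expXY i j) 1 := by
  simp [Xv, Yv, X_pow_eq_monomial, monomial_mul]

lemma cubic_eq_sum_monomial (a₀ a₁ a₂ a₃ : ℂ) :
    cubic a₀ a₁ a₂ a₃ = monomial (expXY 3 0) a₀ + monomial (expXY 2 1) a₁
      + monomial (expXY 1 2) a₂ + monomial (expXY 0 3) a₃ := by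
  have h (a : ℂ) (i j : ℕ) : C a * (Xv ^ i * Yv ^ j) = monomial (expXY i j) a := by
    rw [Xv_pow_mul_Yv_pow, C_mul_monomial, mul_one]
  simp only [← h, cubic, pow_zero, pow_one, mul_one, one_mul]

lemma cf_cubic (i j : ℕ) (a₀ a₁ a₂ a₃ : ℂ) :
    cf i j (cubic a₀ a₁ a₂ a₃) =
      if i = 3 ∧ j = 0 then a₀ else if i = 2 ∧ j = 1 then a₁
      else if i = 1 ∧ j = 2 then a₂ else if i = 0 ∧ j = 3 then a₃ else 0 := by
  simp only [cf, cubic_eq_sum_monomial, coeff_add, coeff_monomial, expXY_inj]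
  split_ifs <;> first | omega | ring

@[simp] lemma cf_cubic_3_0 (a₀ a₁ a₂ a₃ : ℂ) : cf 3 0 (cubic a₀ a₁ a₂ a₃) = a₀ := by simp [cf_cubic]
@[simp] lemma cf_cubic_2_1 (a₀ a₁ a₂ a₃ : ℂ) : cf 2 1 (cubic a₀ a₁ a₂ a₃) = a₁ := by simp [cf_cubic]
@[simp] lemma cf_cubic_1_2 (a₀ a₁ a₂ a₃ : ℂ) : cf 1 2 (cubic a₀ a₁ a₂ a₃) = a₂ := by simp [cf_cubic]
@[simp] lemma cf_cubic_0_3 (a₀ a₁ a₂ a₃ : ℂ) : cf 0 3 (cubic a₀ a₁ a₂ a₃) = a₃ := by simp [cf_cubic]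

lemma cf_add (i j : ℕ) (p q : P2) : cf i j (p + q) = cf i j p + cf i j q := coeff_add _ _ _

lemma cf_smul (i j : ℕ) (c : ℂ) (p : P2) : cf i j (c • p) = c * cf i j p := coeff_smul _ _ _

lemma cubic_mem_Vcubic (a₀ a₁ a₂ a₃ : ℂ) : cubic a₀ a₁ a₂ a₃ ∈ Vcubic := by
  rw [cubic_eq_sum_monomial]
  refine add_mem (add_mem (add_mem ?_ ?_) ?_) ?_ <;>
    exact isHomogeneous_monomial _ (by simp [map_add])

lemma eq_cubic_of_mem_Vcubic {p : P2} (hp : p ∈ Vcubic) :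
    p = cubic (cf 3 0 p) (cf 2 1 p) (cf 1 2 p) (cf 0 3 p) := by
  ext d
  obtain ⟨i, j, rfl⟩ : ∃ i j, d = expXY i j := ⟨_, _, eq_expXY d⟩
  change cf i j p = cf i j _
  rw [cf_cubic]
  by_cases hij : i + j = 3
  · obtain ⟨rfl, rfl⟩ | ⟨rfl, rfl⟩ | ⟨rfl, rfl⟩ | ⟨rfl, rfl⟩ :
        (i = 3 ∧ j = 0) ∨ (i = 2 ∧ j = 1) ∨ (i = 1 ∧ j = 2) ∨ (i = 0 ∧ j = 3) := by omega
    all_goals simp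
  · rw [if_neg (by omega), if_neg (by omega), if_neg (by omega), if_neg (by omega)]
    exact (show p.IsHomogeneous 3 from hp).coeff_eq_zero (by simpa [map_add] using hij)

lemma mem_Vcubic_iff {p : P2} : p ∈ Vcubic ↔ ∃ a₀ a₁ a₂ a₃, p = cubic a₀ a₁ a₂ a₃ :=
  ⟨fun hp => ⟨_, _, _, _, eq_cubic_of_mem_Vcubic hp⟩,
    fun ⟨_, _, _, _, hp⟩ => hp ▸ cubic_mem_Vcubic _ _ _ _⟩

end Coordinates

section CubicAlgebra

lemma cubic_add (a₀ a₁ a₂ a₃ b₀ b₁ b₂ b₃ : ℂ) :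
    cubic a₀ a₁ a₂ a₃ + cubic b₀ b₁ b₂ b₃ = cubic (a₀ + b₀) (a₁ + b₁) (a₂ + b₂) (a₃ + b₃) := by
  simp only [cubic, map_add]; ring

lemma smul_cubic (c a₀ a₁ a₂ a₃ : ℂ) :
    c • cubic a₀ a₁ a₂ a₃ = cubic (c * a₀) (c * a₁) (c * a₂) (c * a₃) := by
  simp only [smul_eq_C_mul, cubic, map_mul]; ring

lemma cubic_inj {a₀ a₁ a₂ a₃ b₀ b₁ b₂ b₃ : ℂ} :
    cubic a₀ a₁ a₂ a₃ = cubic b₀ b₁ b₂ b₃ ↔ a₀ = b₀ ∧ a₁ = b₁ ∧ a₂ = b₂ ∧ a₃ = b₃ := by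
  refine ⟨fun h => ⟨?_, ?_, ?_, ?_⟩, fun ⟨h₀, h₁, h₂, h₃⟩ => by rw [h₀, h₁, h₂, h₃]⟩
  · simpa using congrArg (cf 3 0) h
  · simpa using congrArg (cf 2 1) h
  · simpa using congrArg (cf 1 2) h
  · simpa using congrArg (cf 0 3) h

lemma cubic_eq_zero_iff {a₀ a₁ a₂ a₃ : ℂ} :
    cubic a₀ a₁ a₂ a₃ = 0 ↔ a₀ = 0 ∧ a₁ = 0 ∧ a₂ = 0 ∧ a₃ = 0 := by
  rw [← cubic_inj (b₀ := 0) (b₁ := 0) (b₂ := 0) (b₃ := 0)]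
  simp [cubic]

lemma Xv_pow_three_eq_cubic : Xv ^ 3 = cubic 1 0 0 0 := by simp [cubic]
lemma Xv_sq_mul_Yv_eq_cubic : Xv ^ 2 * Yv = cubic 0 1 0 0 := by simp [cubic]
lemma Xv_mul_Yv_sq_eq_cubic : Xv * Yv ^ 2 = cubic 0 0 1 0 := by simp [cubic]
lemma Xv_pow_three_add_Yv_pow_three_eq_cubic : Xv ^ 3 + Yv ^ 3 = cubic 1 0 0 1 := by simp [cubic]

lemma omegaForm_cubic (a₀ a₁ a₂ a₃ b₀ b₁ b₂ b₃ : ℂ) :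
    omegaForm (cubic a₀ a₁ a₂ a₃) (cubic b₀ b₁ b₂ b₃) =
      a₀ * b₃ - a₃ * b₀ - (1 / 3) * (a₁ * b₂ - a₂ * b₁) := by
  simp [omegaForm]

end CubicAlgebra

section Action

@[simp] lemma subst_C (g : SL(2, ℂ)) (a : ℂ) : subst g (C a) = C a := by
  simp [subst, algebraMap_eq]

@[simp] lemma subst_Xv (g : SL(2, ℂ)) : subst g Xv = C (g 0 0) * Xv + C (g 0 1) * Yv := by
  simp [subst, Xv]

@[simp] lemma subst_Yv (g : SL(2, ℂ)) : subst g Yv = C (g 1 0) * Xv + C (g 1 1) * Yv := by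
  simp [subst, Yv]

lemma subst_comp_subst (g h : SL(2, ℂ)) : (subst g).comp (subst h) = subst (h * g) := by
  refine algHom_ext fun i => ?_
  have hX (k : SL(2, ℂ)) : subst k (X i) = C (k i 0) * Xv + C (k i 1) * Yv := aeval_X _ _
  simp only [AlgHom.comp_apply, hX, map_add, map_mul, subst_C, subst_Xv, subst_Yv,
    Matrix.SpecialLinearGroup.coe_mul, Matrix.mul_apply, Fin.sum_univ_two]
  ring

lemma subst_one : subst 1 = AlgHom.id ℂ P2 := by
  refine algHom_ext fun i => ?_
  fin_cases i <;> simp [subst, Xv, Yv]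

lemma subst_inv_subst (g : SL(2, ℂ)) (p : P2) : subst g⁻¹ (subst g p) = p := by
  rw [← AlgHom.comp_apply, subst_comp_subst, mul_inv_cancel, subst_one, AlgHom.id_apply]

lemma subst_subst_inv (g : SL(2, ℂ)) (p : P2) : subst g (subst g⁻¹ p) = p := by
  simpa using subst_inv_subst g⁻¹ p

def sl2Mk (a b c d : ℂ) (h : a * d - b * c = 1) : SL(2, ℂ) :=
  ⟨!![a, b; c, d], by rwa [Matrix.det_fin_two_of]⟩

@[simp] lemma coe_sl2Mk (a b c d : ℂ) (h : a * d - b * c = 1) :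
    (sl2Mk a b c d h : Matrix (Fin 2) (Fin 2) ℂ) = !![a, b; c, d] := rfl

lemma subst_cubic (a b c d : ℂ) (h : a * d - b * c = 1) (a₀ a₁ a₂ a₃ : ℂ) :
    subst (sl2Mk a b c d h) (cubic a₀ a₁ a₂ a₃) =
      cubic (a₀ * a ^ 3 + a₁ * a ^ 2 * c + a₂ * a * c ^ 2 + a₃ * c ^ 3)
        (3 * a₀ * a ^ 2 * b + a₁ * (a ^ 2 * d + 2 * a * b * c) + a₂ * (2 * a * c * d + b * c ^ 2)
          + 3 * a₃ * c ^ 2 * d)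
        (3 * a₀ * a * b ^ 2 + a₁ * (2 * a * b * d + b ^ 2 * c) + a₂ * (a * d ^ 2 + 2 * b * c * d)
          + 3 * a₃ * c * d ^ 2)
        (a₀ * b ^ 3 + a₁ * b ^ 2 * d + a₂ * b * d ^ 2 + a₃ * d ^ 3) := by
  simp only [cubic, map_add, map_mul, map_pow, map_ofNat, subst_C, subst_Xv, subst_Yv, coe_sl2Mk,
    Matrix.of_apply, Matrix.cons_val_zero, Matrix.cons_val_one]
  ring

lemma exists_eq_sl2Mk (g : SL(2, ℂ)) : ∃ a b c d h, g = sl2Mk a b c d h := by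
  induction g using Matrix.SpecialLinearGroup.fin_two_induction with
  | h a b c d h => exact ⟨a, b, c, d, h, rfl⟩

end Action

section Invariants

lemma subst_mem_Vcubic (g : SL(2, ℂ)) {p : P2} (hp : p ∈ Vcubic) : subst g p ∈ Vcubic := by
  have hlin (i : Fin 2) : (C (g i 0) * Xv + C (g i 1) * Yv).IsHomogeneous 1 :=
    (isHomogeneous_C_mul_X _ _).add (isHomogeneous_C_mul_X _ _)
  exact (show p.IsHomogeneous 3 from hp).aeval _ hlin

lemma omegaForm_subst (g : SL(2, ℂ)) {p q : P2} (hp : p ∈ Vcubic) (hq : q ∈ Vcubic) :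
    omegaForm (subst g p) (subst g q) = omegaForm p q := by
  obtain ⟨a, b, c, d, hdet, rfl⟩ := exists_eq_sl2Mk g
  obtain ⟨a₀, a₁, a₂, a₃, rfl⟩ := mem_Vcubic_iff.mp hp
  obtain ⟨b₀, b₁, b₂, b₃, rfl⟩ := mem_Vcubic_iff.mp hq
  have h : omegaForm (subst (sl2Mk a b c d hdet) (cubic a₀ a₁ a₂ a₃))
      (subst (sl2Mk a b c d hdet) (cubic b₀ b₁ b₂ b₃)) =
      (a * d - b * c) ^ 3 * omegaForm (cubic a₀ a₁ a₂ a₃) (cubic b₀ b₁ b₂ b₃) := by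
    simp only [subst_cubic, omegaForm_cubic]
    ring
  rw [h, hdet, one_pow, one_mul]

def cubicDisc {R : Type*} [CommRing R] (a₀ a₁ a₂ a₃ : R) : R :=
  18 * a₀ * a₁ * a₂ * a₃ - 4 * a₁ ^ 3 * a₃ + a₁ ^ 2 * a₂ ^ 2 - 4 * a₀ * a₂ ^ 3
    - 27 * a₀ ^ 2 * a₃ ^ 2

def discr (p : P2) : ℂ := cubicDisc (cf 3 0 p) (cf 2 1 p) (cf 1 2 p) (cf 0 3 p)

@[simp] lemma discr_cubic (a₀ a₁ a₂ a₃ : ℂ) :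
    discr (cubic a₀ a₁ a₂ a₃) = cubicDisc a₀ a₁ a₂ a₃ := by
  simp [discr]

lemma discr_subst (g : SL(2, ℂ)) {p : P2} (hp : p ∈ Vcubic) : discr (subst g p) = discr p := by
  obtain ⟨a, b, c, d, hdet, rfl⟩ := exists_eq_sl2Mk g
  obtain ⟨a₀, a₁, a₂, a₃, rfl⟩ := mem_Vcubic_iff.mp hp
  have h : discr (subst (sl2Mk a b c d hdet) (cubic a₀ a₁ a₂ a₃)) =
      (a * d - b * c) ^ 6 * discr (cubic a₀ a₁ a₂ a₃) := by
    simp only [subst_cubic, discr_cubic, cubicDisc]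
    ring
  rw [h, hdet, one_pow, one_mul]

lemma subst_lf (g : SL(2, ℂ)) (a b : ℂ) :
    subst g (lf a b) = lf (a * g 1 1 - b * g 0 1) (b * g 0 0 - a * g 1 0) := by
  simp only [lf, map_sub, map_mul, subst_C, subst_Xv, subst_Yv]
  ring

lemma isPerfectCube_subst (g : SL(2, ℂ)) {p : P2} (h : IsPerfectCube p) :
    IsPerfectCube (subst g p) := by
  obtain ⟨c, a, b, hc, hab, rfl⟩ := h
  obtain ⟨α, β, γ, δ, hdet, rfl⟩ := exists_eq_sl2Mk g
  refine ⟨c, a * δ - b * β, b * α - a * γ, hc, ?_, ?_⟩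
  · contrapose! hab
    exact ⟨by linear_combination α * hab.1 + β * hab.2 - a * hdet,
      by linear_combination γ * hab.1 + δ * hab.2 - b * hdet⟩
  · simp [subst_lf]

end Invariants

section SpanPair

variable {K M : Type*} [Field K] [AddCommGroup M] [Module K M]

lemma span_pair_smul_add_smul {x y : M} (a : K) {c : K} (hc : c ≠ 0) :
    Submodule.span K {x, a • x + c • y} = Submodule.span K {x, y} := by
  refine le_antisymm (Submodule.span_le.mpr ?_) (Submodule.span_le.mpr ?_) <;>
    rintro z (rfl | rfl)
  · exact Submodule.subset_span (Set.mem_insert _ _)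
  · exact Submodule.mem_span_pair.mpr ⟨a, c, rfl⟩
  · exact Submodule.subset_span (Set.mem_insert _ _)
  · refine Submodule.mem_span_pair.mpr ⟨-(c⁻¹ * a), c⁻¹, ?_⟩
    rw [smul_add, smul_smul, smul_smul, inv_mul_cancel₀ hc, one_smul, neg_smul]
    abel

lemma span_pair_smul_right {x y : M} {c : K} (hc : c ≠ 0) :
    Submodule.span K {x, c • y} = Submodule.span K {x, y} := by
  simpa using span_pair_smul_add_smul (x := x) (y := y) 0 hc

lemma span_pair_smul_left {x y : M} {c : K} (hc : c ≠ 0) :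
    Submodule.span K {c • x, y} = Submodule.span K {x, y} := by
  rw [Set.pair_comm, span_pair_smul_right hc, Set.pair_comm]

lemma linearIndependent_pair {x y : M} (hx : x ≠ 0) (hy : y ∉ Submodule.span K {x}) :
    LinearIndependent K ![x, y] :=
  (LinearIndependent.pair_iff' hx).mpr fun a h =>
    hy (h ▸ Submodule.smul_mem _ a (Submodule.mem_span_singleton_self x))

lemma add_smul_ne_zero {x y : M} (hx : x ≠ 0) (hy : y ∉ Submodule.span K {x}) (t : K) :
    x + t • y ≠ 0 := fun h =>
  one_ne_zero ((LinearIndependent.pair_iff.mp (linearIndependent_pair hx hy) 1 t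
    (by rwa [one_smul])).1)

lemma finrank_span_pair {x y : M} (hx : x ≠ 0) (hy : y ∉ Submodule.span K {x}) :
    Module.finrank K (Submodule.span K {x, y}) = 2 := by
  rw [← Matrix.range_cons_cons_empty, finrank_span_eq_card (linearIndependent_pair hx hy),
    Fintype.card_fin]

lemma exists_notMem_span_singleton {W : Submodule K M} (hW : Module.finrank K W = 2) (x : M) :
    ∃ y ∈ W, y ∉ Submodule.span K {x} := by
  by_contra! h
  have : Module.finrank K W ≤ 1 :=
    (Submodule.finrank_mono h).trans (by simpa using finrank_span_le_card ({x} : Set M))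
  omega

lemma eq_span_pair {W : Submodule K M} (hW : Module.finrank K W = 2) {x y : M} (hx : x ∈ W)
    (hy : y ∈ W) (hx0 : x ≠ 0) (hyx : y ∉ Submodule.span K {x}) :
    W = Submodule.span K {x, y} := by
  have : FiniteDimensional K W := Module.finite_of_finrank_eq_succ hW
  refine (Submodule.eq_of_le_of_finrank_le ?_ (by rw [finrank_span_pair hx0 hyx, hW])).symm
  rw [Submodule.span_le]
  rintro z (rfl | rfl) <;> assumption

end SpanPair

section Orbits

lemma subst_injective (g : SL(2, ℂ)) : Function.Injective (subst g) :=
  Function.LeftInverse.injective (subst_inv_subst g)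

lemma subst_mem_mapAct (g : SL(2, ℂ)) {W : Submodule ℂ P2} {p : P2} (hp : p ∈ W) :
    subst g p ∈ mapAct g W :=
  Submodule.mem_map_of_mem hp

lemma mem_mapAct_inv_iff {g : SL(2, ℂ)} {W : Submodule ℂ P2} {p : P2} :
    p ∈ mapAct g⁻¹ W ↔ subst g p ∈ W := by
  refine ⟨?_, fun h => ?_⟩
  · rintro ⟨q, hq, rfl⟩
    simpa [subst_subst_inv] using hq
  · simpa [subst_inv_subst] using subst_mem_mapAct g⁻¹ h

lemma mapAct_mapAct (g h : SL(2, ℂ)) (W : Submodule ℂ P2) :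
    mapAct g (mapAct h W) = mapAct (h * g) W := by
  rw [mapAct, mapAct, mapAct, ← Submodule.map_comp, ← AlgHom.comp_toLinearMap, subst_comp_subst]

lemma mapAct_one (W : Submodule ℂ P2) : mapAct 1 W = W := by
  simp [mapAct, subst_one]

lemma finrank_mapAct (g : SL(2, ℂ)) (W : Submodule ℂ P2) :
    Module.finrank ℂ (mapAct g W) = Module.finrank ℂ W :=
  (W.equivMapOfInjective _ (subst_injective g)).finrank_eq.symm

lemma mapAct_span_pair (g : SL(2, ℂ)) (x y : P2) :
    mapAct g (Submodule.span ℂ {x, y}) = Submodule.span ℂ {subst g x, subst g y} := by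
  simp [mapAct, Submodule.map_span, Set.image_insert_eq]

lemma mapAct_mem_slOrbit {W L : Submodule ℂ P2} (g : SL(2, ℂ)) (hW : W ∈ slOrbit L) :
    mapAct g W ∈ slOrbit L := by
  obtain ⟨h, rfl⟩ := hW
  exact ⟨h * g, mapAct_mapAct g h L⟩

lemma mem_slOrbit_of_mapAct_mem {W L : Submodule ℂ P2} (g : SL(2, ℂ))
    (hW : mapAct g W ∈ slOrbit L) : W ∈ slOrbit L := by
  simpa [mapAct_mapAct, mapAct_one] using mapAct_mem_slOrbit g⁻¹ hW

lemma isLagrangian_mapAct {W : Submodule ℂ P2} (g : SL(2, ℂ)) (hW : IsLagrangian W) :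
    IsLagrangian (mapAct g W) := by
  refine ⟨?_, (finrank_mapAct g W).trans hW.2.1, ?_⟩
  · rintro _ ⟨p, hp, rfl⟩
    exact subst_mem_Vcubic g (hW.1 hp)
  · rintro _ ⟨p, hp, rfl⟩ _ ⟨q, hq, rfl⟩
    exact (omegaForm_subst g (hW.1 hp) (hW.1 hq)).trans (hW.2.2 p hp q hq)

end Orbits

section Models

lemma omegaForm_eq_zero_of_mem_span_pair {x y : P2} (h : omegaForm x y = 0) {p q : P2}
    (hp : p ∈ Submodule.span ℂ {x, y}) (hq : q ∈ Submodule.span ℂ {x, y}) :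
    omegaForm p q = 0 := by
  obtain ⟨a, b, rfl⟩ := Submodule.mem_span_pair.mp hp
  obtain ⟨c, d, rfl⟩ := Submodule.mem_span_pair.mp hq
  simp only [omegaForm, cf_add, cf_smul] at h ⊢
  linear_combination (a * d - b * c) * h

lemma isLagrangian_span_pair {x y : P2} (hx : x ∈ Vcubic) (hy : y ∈ Vcubic) (hx0 : x ≠ 0)
    (hyx : y ∉ Submodule.span ℂ {x}) (hω : omegaForm x y = 0) :
    IsLagrangian (Submodule.span ℂ {x, y}) := by
  refine ⟨?_, finrank_span_pair hx0 hyx, fun p hp q hq =>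
    omegaForm_eq_zero_of_mem_span_pair hω hp hq⟩
  rw [Submodule.span_le]
  rintro z (rfl | rfl) <;> assumption

lemma isLagrangian_span_cubic {a₀ a₁ a₂ a₃ b₀ b₁ b₂ b₃ : ℂ}
    (hx0 : cubic a₀ a₁ a₂ a₃ ≠ 0) (hyx : cubic b₀ b₁ b₂ b₃ ∉ Submodule.span ℂ {cubic a₀ a₁ a₂ a₃})
    (hω : a₀ * b₃ - a₃ * b₀ - (1 / 3) * (a₁ * b₂ - a₂ * b₁) = 0) :
    IsLagrangian (Submodule.span ℂ {cubic a₀ a₁ a₂ a₃, cubic b₀ b₁ b₂ b₃}) :=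
  isLagrangian_span_pair (cubic_mem_Vcubic _ _ _ _) (cubic_mem_Vcubic _ _ _ _) hx0 hyx
    (by rwa [omegaForm_cubic])

lemma isLagrangian_L₁ : IsLagrangian L₁ := by
  rw [L₁, Xv_pow_three_eq_cubic, Xv_sq_mul_Yv_eq_cubic]
  refine isLagrangian_span_cubic (by simp [cubic_eq_zero_iff]) ?_ (by ring)
  simp [Submodule.mem_span_singleton, smul_cubic, cubic_inj]

lemma isLagrangian_L₂ : IsLagrangian L₂ := by
  rw [L₂, Xv_pow_three_eq_cubic, Xv_mul_Yv_sq_eq_cubic]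
  refine isLagrangian_span_cubic (by simp [cubic_eq_zero_iff]) ?_ (by ring)
  simp [Submodule.mem_span_singleton, smul_cubic, cubic_inj]

lemma isLagrangian_L₃ : IsLagrangian L₃ := by
  rw [L₃, Xv_sq_mul_Yv_eq_cubic, Xv_pow_three_add_Yv_pow_three_eq_cubic]
  refine isLagrangian_span_cubic (by simp [cubic_eq_zero_iff]) ?_ (by ring)
  simp [Submodule.mem_span_singleton, smul_cubic, cubic_inj]

lemma C_mul_lf_pow_three (c a b : ℂ) :
    C c * lf a b ^ 3 =
      cubic (c * b ^ 3) (-(3 * c * b ^ 2 * a)) (3 * c * b * a ^ 2) (-(c * a ^ 3)) := by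
  simp only [lf, cubic, map_mul, map_neg, map_pow, map_ofNat]
  ring

lemma isPerfectCube_Xv_pow_three : IsPerfectCube (Xv ^ 3) :=
  ⟨1, 0, 1, one_ne_zero, Or.inr one_ne_zero, by simp [lf]⟩

lemma not_isPerfectCube_of_mem_L₃ {p : P2} (hp : p ∈ L₃) : ¬IsPerfectCube p := by
  rintro ⟨c, a, b, hc, hab, rfl⟩
  rw [L₃, Xv_sq_mul_Yv_eq_cubic, Xv_pow_three_add_Yv_pow_three_eq_cubic] at hp
  obtain ⟨s, t, hst⟩ := Submodule.mem_span_pair.mp hp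
  rw [smul_cubic, smul_cubic, cubic_add, C_mul_lf_pow_three, cubic_inj] at hst
  obtain ⟨h₀, -, h₂, h₃⟩ := hst
  have hba : b * a ^ 2 = 0 := by
    simpa [hc] using (show c * (b * a ^ 2) = 0 by linear_combination (-1 / 3) * h₂)
  have hab3 : a ^ 3 + b ^ 3 = 0 := by
    simpa [hc] using (show c * (a ^ 3 + b ^ 3) = 0 by linear_combination h₃ - h₀)
  rcases mul_eq_zero.mp hba with hb | ha
  · exact hab.elim (fun ha => ha (by simpa [hb] using hab3)) (· hb)
  · have ha : a = 0 := pow_eq_zero_iff two_ne_zero |>.mp ha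
    exact hab.elim (· ha) (fun hb => hb (by simpa [ha] using hab3))

lemma discr_eq_zero_of_mem_L₁ {p : P2} (hp : p ∈ L₁) : discr p = 0 := by
  rw [L₁, Xv_pow_three_eq_cubic, Xv_sq_mul_Yv_eq_cubic] at hp
  obtain ⟨s, t, rfl⟩ := Submodule.mem_span_pair.mp hp
  simp [smul_cubic, cubic_add, cubicDisc]

lemma discr_Xv_pow_three_add_Xv_mul_Yv_sq : discr (Xv ^ 3 + Xv * Yv ^ 2) ≠ 0 := by
  rw [Xv_pow_three_eq_cubic, Xv_mul_Yv_sq_eq_cubic, cubic_add]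
  norm_num [cubicDisc]

end Models

section Disjointness

variable {W : Submodule ℂ P2}

lemma exists_isPerfectCube_of_mem_slOrbit {L : Submodule ℂ P2} (hL : Xv ^ 3 ∈ L)
    (hW : W ∈ slOrbit L) : ∃ p ∈ W, IsPerfectCube p := by
  obtain ⟨g, rfl⟩ := hW
  exact ⟨_, subst_mem_mapAct g hL, isPerfectCube_subst g isPerfectCube_Xv_pow_three⟩

lemma not_isPerfectCube_of_mem_slOrbit_L₃ (hW : W ∈ slOrbit L₃) :
    ∀ p ∈ W, ¬IsPerfectCube p := by
  obtain ⟨g, rfl⟩ := hW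
  rintro _ ⟨q, hq, rfl⟩ hcube
  have h := isPerfectCube_subst g⁻¹ hcube
  rw [AlgHom.toLinearMap_apply, subst_inv_subst] at h
  exact not_isPerfectCube_of_mem_L₃ hq h

lemma discr_eq_zero_of_mem_slOrbit_L₁ (hW : W ∈ slOrbit L₁) : ∀ p ∈ W, discr p = 0 := by
  obtain ⟨g, rfl⟩ := hW
  rintro _ ⟨q, hq, rfl⟩
  rw [AlgHom.toLinearMap_apply, discr_subst g (isLagrangian_L₁.1 hq), discr_eq_zero_of_mem_L₁ hq]

lemma exists_discr_ne_zero_of_mem_slOrbit_L₂ (hW : W ∈ slOrbit L₂) : ∃ p ∈ W, discr p ≠ 0 := by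
  obtain ⟨g, rfl⟩ := hW
  have hmem : Xv ^ 3 + Xv * Yv ^ 2 ∈ L₂ :=
    add_mem (Submodule.subset_span (by simp)) (Submodule.subset_span (by simp))
  refine ⟨_, subst_mem_mapAct g hmem, ?_⟩
  rw [discr_subst g (isLagrangian_L₂.1 hmem)]
  exact discr_Xv_pow_three_add_Xv_mul_Yv_sq

lemma notMem_slOrbit_L₂_of_mem_slOrbit_L₁ (h₁ : W ∈ slOrbit L₁) : W ∉ slOrbit L₂ := fun h₂ => by
  obtain ⟨p, hp, hd⟩ := exists_discr_ne_zero_of_mem_slOrbit_L₂ h₂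
  exact hd (discr_eq_zero_of_mem_slOrbit_L₁ h₁ p hp)

lemma notMem_slOrbit_L₃_of_mem_slOrbit {L : Submodule ℂ P2} (hL : Xv ^ 3 ∈ L)
    (hW : W ∈ slOrbit L) : W ∉ slOrbit L₃ := fun h₃ => by
  obtain ⟨p, hp, hc⟩ := exists_isPerfectCube_of_mem_slOrbit hL hW
  exact not_isPerfectCube_of_mem_slOrbit_L₃ h₃ p hp hc

end Disjointness

section Factorization

lemma lf_mul_lf_mul_lf (α₁ β₁ α₂ β₂ α₃ β₃ : ℂ) :
    lf α₁ β₁ * lf α₂ β₂ * lf α₃ β₃ =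
      cubic (β₁ * β₂ * β₃) (-(α₁ * β₂ * β₃ + β₁ * α₂ * β₃ + β₁ * β₂ * α₃))
        (α₁ * α₂ * β₃ + α₁ * β₂ * α₃ + β₁ * α₂ * α₃) (-(α₁ * α₂ * α₃)) := by
  simp only [lf, cubic, map_mul, map_neg, map_add]
  ring

lemma discr_lf_mul_lf_mul_lf (α₁ β₁ α₂ β₂ α₃ β₃ : ℂ) :
    discr (lf α₁ β₁ * lf α₂ β₂ * lf α₃ β₃) =
      ((α₁ * β₂ - α₂ * β₁) * (α₁ * β₃ - α₃ * β₁) * (α₂ * β₃ - α₃ * β₂)) ^ 2 := by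
  rw [lf_mul_lf_mul_lf, discr_cubic, cubicDisc]
  ring

-- `q₀X² + q₁XY + q₂Y² = (β₂X - α₂Y)(β₃X - α₃Y)`
lemma exists_factor_quadratic {q₀ q₁ q₂ : ℂ} (h : q₀ ≠ 0 ∨ q₁ ≠ 0 ∨ q₂ ≠ 0) :
    ∃ α₂ β₂ α₃ β₃ : ℂ, (α₂ ≠ 0 ∨ β₂ ≠ 0) ∧ (α₃ ≠ 0 ∨ β₃ ≠ 0) ∧
      q₀ = β₂ * β₃ ∧ q₁ = -(α₂ * β₃ + β₂ * α₃) ∧ q₂ = α₂ * α₃ := by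
  by_cases hq₀ : q₀ = 0
  · refine ⟨-1, 0, -q₂, q₁, by norm_num, ?_, by simp [hq₀], by ring, by ring⟩
    rcases h with h | h | h
    · exact absurd hq₀ h
    · exact Or.inr h
    · exact Or.inl (neg_ne_zero.mpr h)
  · obtain ⟨s, hs⟩ := IsAlgClosed.exists_pow_nat_eq (q₁ ^ 2 - 4 * q₀ * q₂) two_pos
    refine ⟨(-q₁ + s) / (2 * q₀), 1, (-q₁ - s) / 2, q₀, Or.inr one_ne_zero, Or.inr hq₀,
      by ring, by field_simp; ring, ?_⟩
    field_simp
    linear_combination hs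

-- `a₀X³ + a₁X²Y + a₂XY² + a₃Y³ = (β₁X - α₁Y)(q₀X² + q₁XY + q₂Y²)`
lemma exists_factor_cubic {a₀ a₁ a₂ a₃ : ℂ} (h : cubic a₀ a₁ a₂ a₃ ≠ 0) :
    ∃ α₁ β₁ q₀ q₁ q₂ : ℂ, (α₁ ≠ 0 ∨ β₁ ≠ 0) ∧ (q₀ ≠ 0 ∨ q₁ ≠ 0 ∨ q₂ ≠ 0) ∧
      a₀ = β₁ * q₀ ∧ a₁ = β₁ * q₁ - α₁ * q₀ ∧ a₂ = β₁ * q₂ - α₁ * q₁ ∧ a₃ = -(α₁ * q₂) := by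
  rw [Ne, cubic_eq_zero_iff] at h
  by_cases ha₀ : a₀ = 0
  · refine ⟨1, 0, -a₁, -a₂, -a₃, Or.inl one_ne_zero, ?_, by simp [ha₀], by ring, by ring, by ring⟩
    contrapose! h
    simp_all
  · let f : Polynomial ℂ := .C a₀ * .X ^ 3 + .C a₁ * .X ^ 2 + .C a₂ * .X + .C a₃
    have hf : f.degree = 3 := by simp only [f]; compute_degree!
    obtain ⟨z, hz⟩ := IsAlgClosed.exists_root f (by simp [hf])
    simp only [f, Polynomial.IsRoot, Polynomial.eval_add, Polynomial.eval_mul, Polynomial.eval_pow,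
      Polynomial.eval_C, Polynomial.eval_X] at hz
    exact ⟨z, 1, a₀, a₁ + z * a₀, a₂ + z * (a₁ + z * a₀), Or.inr one_ne_zero, Or.inl ha₀,
      by ring, by ring, by ring, by linear_combination hz⟩

lemma exists_eq_lf_mul_lf_mul_lf {p : P2} (hp : p ∈ Vcubic) (hp0 : p ≠ 0) :
    ∃ α₁ β₁ α₂ β₂ α₃ β₃ : ℂ, (α₁ ≠ 0 ∨ β₁ ≠ 0) ∧ (α₂ ≠ 0 ∨ β₂ ≠ 0) ∧ (α₃ ≠ 0 ∨ β₃ ≠ 0) ∧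
      p = lf α₁ β₁ * lf α₂ β₂ * lf α₃ β₃ := by
  obtain ⟨a₀, a₁, a₂, a₃, rfl⟩ := mem_Vcubic_iff.mp hp
  obtain ⟨α₁, β₁, q₀, q₁, q₂, h₁, hq, rfl, rfl, rfl, rfl⟩ := exists_factor_cubic hp0
  obtain ⟨α₂, β₂, α₃, β₃, h₂, h₃, rfl, rfl, rfl⟩ := exists_factor_quadratic hq
  refine ⟨α₁, β₁, α₂, β₂, α₃, β₃, h₁, h₂, h₃, ?_⟩
  rw [lf_mul_lf_mul_lf, cubic_inj]
  exact ⟨by ring, by ring, by ring, by ring⟩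

lemma exists_lf_eq_C_mul_lf {α β γ δ : ℂ} (h₁ : α ≠ 0 ∨ β ≠ 0) (h₂ : γ ≠ 0 ∨ δ ≠ 0)
    (h : α * δ - β * γ = 0) : ∃ μ : ℂ, μ ≠ 0 ∧ lf γ δ = C μ * lf α β := by
  suffices ∃ μ : ℂ, γ = μ * α ∧ δ = μ * β by
    obtain ⟨μ, rfl, rfl⟩ := this
    refine ⟨μ, fun hμ => by simp [hμ] at h₂, ?_⟩
    simp only [lf, map_mul]
    ring
  rcases h₁ with hα | hβ
  · exact ⟨γ / α, by field_simp, by field_simp; linear_combination h⟩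
  · exact ⟨δ / β, by field_simp; linear_combination -h, by field_simp⟩

lemma exists_lf_mul_lf_mul_eq {α₁ β₁ α₂ β₂ : ℂ} (h₁ : α₁ ≠ 0 ∨ β₁ ≠ 0)
    (h₂ : α₂ ≠ 0 ∨ β₂ ≠ 0) (h : α₁ * β₂ - β₁ * α₂ = 0) (ℓ : P2) :
    ∃ μ : ℂ, μ ≠ 0 ∧ lf α₁ β₁ * lf α₂ β₂ * ℓ = C μ * (lf α₁ β₁ ^ 2 * ℓ) := by
  obtain ⟨μ, hμ, he⟩ := exists_lf_eq_C_mul_lf h₁ h₂ h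
  exact ⟨μ, hμ, by rw [he]; ring⟩

lemma det_ne_zero_of_not_isPerfectCube {p : P2} (hp : ¬IsPerfectCube p) {c A B G D : ℂ}
    (hc : c ≠ 0) (h₁ : A ≠ 0 ∨ B ≠ 0) (h₂ : G ≠ 0 ∨ D ≠ 0)
    (he : p = C c * (lf A B ^ 2 * lf G D)) : A * D - B * G ≠ 0 := by
  intro h
  obtain ⟨μ, hμ, hGD⟩ := exists_lf_eq_C_mul_lf h₁ h₂ h
  refine hp ⟨c * μ, A, B, mul_ne_zero hc hμ, h₁, ?_⟩
  rw [he, hGD, map_mul]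
  ring

lemma exists_eq_C_mul_lf_sq_mul_lf {p : P2} (hp : p ∈ Vcubic) (hp0 : p ≠ 0) (hd : discr p = 0)
    (hnc : ¬IsPerfectCube p) :
    ∃ c A B G D : ℂ, c ≠ 0 ∧ A * D - B * G ≠ 0 ∧ p = C c * (lf A B ^ 2 * lf G D) := by
  obtain ⟨α₁, β₁, α₂, β₂, α₃, β₃, h₁, h₂, h₃, rfl⟩ := exists_eq_lf_mul_lf_mul_lf hp hp0
  rw [discr_lf_mul_lf_mul_lf, sq_eq_zero_iff, mul_eq_zero, mul_eq_zero] at hd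
  suffices ∃ c A B G D : ℂ, c ≠ 0 ∧ (A ≠ 0 ∨ B ≠ 0) ∧ (G ≠ 0 ∨ D ≠ 0) ∧
      lf α₁ β₁ * lf α₂ β₂ * lf α₃ β₃ = C c * (lf A B ^ 2 * lf G D) by
    obtain ⟨c, A, B, G, D, hc, hAB, hGD, he⟩ := this
    exact ⟨c, A, B, G, D, hc, det_ne_zero_of_not_isPerfectCube hnc hc hAB hGD he, he⟩
  rcases hd with (h | h) | h
  · obtain ⟨μ, hμ, he⟩ :=
      exists_lf_mul_lf_mul_eq h₁ h₂ (by linear_combination h) (lf α₃ β₃)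
    exact ⟨μ, α₁, β₁, α₃, β₃, hμ, h₁, h₃, he⟩
  · obtain ⟨μ, hμ, he⟩ :=
      exists_lf_mul_lf_mul_eq h₁ h₃ (by linear_combination h) (lf α₂ β₂)
    exact ⟨μ, α₁, β₁, α₂, β₂, hμ, h₁, h₂, by rw [mul_right_comm, he]⟩
  · obtain ⟨μ, hμ, he⟩ :=
      exists_lf_mul_lf_mul_eq h₂ h₃ (by linear_combination h) (lf α₁ β₁)
    exact ⟨μ, α₂, β₂, α₁, β₁, hμ, h₂, h₁, by rw [← he]; ring⟩

end Factorization

section Pencil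

/-- `t ↦ cubicDisc (a + t b)` is a quartic polynomial with leading coefficient `cubicDisc b`. -/
lemma exists_cubicDisc_add_mul_eq_zero (a₀ a₁ a₂ a₃ b₀ b₁ b₂ b₃ : ℂ)
    (hb : cubicDisc b₀ b₁ b₂ b₃ ≠ 0) :
    ∃ t : ℂ, cubicDisc (a₀ + t * b₀) (a₁ + t * b₁) (a₂ + t * b₂) (a₃ + t * b₃) = 0 := by
  let f : Polynomial ℂ := cubicDisc (.C a₀ + .X * .C b₀) (.C a₁ + .X * .C b₁) (.C a₂ + .X * .C b₂)
    (.C a₃ + .X * .C b₃)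
  have hf : f.degree = 4 := by
    simp only [f, cubicDisc]
    compute_degree!
  obtain ⟨t, ht⟩ := IsAlgClosed.exists_root f (by simp [hf])
  refine ⟨t, ?_⟩
  simpa [f, cubicDisc, mul_comm t] using ht

lemma exists_discr_eq_zero_mem {W : Submodule ℂ P2} (hV : W ≤ Vcubic)
    (hW : Module.finrank ℂ W = 2) : ∃ r ∈ W, r ≠ 0 ∧ discr r = 0 := by
  obtain ⟨x, hx, hx0⟩ := exists_notMem_span_singleton hW 0
  obtain ⟨y, hy, hyx⟩ := exists_notMem_span_singleton hW x
  rw [Submodule.span_singleton_eq_bot.mpr rfl, Submodule.mem_bot] at hx0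
  by_cases hdy : discr y = 0
  · exact ⟨y, hy, fun h => hyx (h ▸ Submodule.zero_mem _), hdy⟩
  obtain ⟨a₀, a₁, a₂, a₃, rfl⟩ := mem_Vcubic_iff.mp (hV hx)
  obtain ⟨b₀, b₁, b₂, b₃, rfl⟩ := mem_Vcubic_iff.mp (hV hy)
  rw [discr_cubic] at hdy
  obtain ⟨t, ht⟩ := exists_cubicDisc_add_mul_eq_zero a₀ a₁ a₂ a₃ b₀ b₁ b₂ b₃ hdy
  refine ⟨cubic a₀ a₁ a₂ a₃ + t • cubic b₀ b₁ b₂ b₃, W.add_mem hx (W.smul_mem t hy), ?_, ?_⟩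
  · exact add_smul_ne_zero hx0 hyx t
  · rwa [smul_cubic, cubic_add, discr_cubic]

end Pencil

section NormalForms

variable {W : Submodule ℂ P2}

lemma exists_subst_eq_lf_of_det_ne_zero {α β γ δ : ℂ} (h : α * δ - β * γ ≠ 0) :
    ∃ g : SL(2, ℂ), subst g Xv = lf α β ∧ subst g Yv = (α * δ - β * γ)⁻¹ • lf γ δ := by
  refine ⟨sl2Mk β (-α) ((α * δ - β * γ)⁻¹ * δ) (-((α * δ - β * γ)⁻¹ * γ))
    (by linear_combination inv_mul_cancel₀ h), ?_, ?_⟩ <;>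
    simp only [subst_Xv, subst_Yv, coe_sl2Mk, Matrix.of_apply, Matrix.cons_val',
      Matrix.cons_val_zero, Matrix.cons_val_fin_one, Matrix.cons_val_one, C_mul, C_neg, lf,
      smul_eq_C_mul] <;> ring

lemma exists_subst_eq_lf {a b : ℂ} (hab : a ≠ 0 ∨ b ≠ 0) : ∃ g : SL(2, ℂ), subst g Xv = lf a b := by
  obtain ⟨γ, δ, h⟩ : ∃ γ δ : ℂ, a * δ - b * γ ≠ 0 := by
    rcases hab with ha | hb
    · exact ⟨0, 1, by simpa using ha⟩
    · exact ⟨-1, 0, by simpa using hb⟩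
  obtain ⟨g, hg, -⟩ := exists_subst_eq_lf_of_det_ne_zero h
  exact ⟨g, hg⟩

lemma exists_Xv_pow_three_mem_mapAct (h : ∃ p ∈ W, IsPerfectCube p) :
    ∃ g : SL(2, ℂ), Xv ^ 3 ∈ mapAct g⁻¹ W := by
  obtain ⟨_, hp, c, a, b, hc, hab, rfl⟩ := h
  obtain ⟨g, hg⟩ := exists_subst_eq_lf hab
  refine ⟨g, mem_mapAct_inv_iff.mpr ?_⟩
  rw [map_pow, hg]
  simpa [smul_eq_C_mul, ← mul_assoc, ← map_mul, inv_mul_cancel₀ hc] using W.smul_mem c⁻¹ hp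

lemma exists_Xv_sq_mul_Yv_mem_mapAct (hW : IsLagrangian W) (hnc : ∀ p ∈ W, ¬IsPerfectCube p) :
    ∃ g : SL(2, ℂ), Xv ^ 2 * Yv ∈ mapAct g⁻¹ W := by
  obtain ⟨r, hr, hr0, hd⟩ := exists_discr_eq_zero_mem hW.1 hW.2.1
  obtain ⟨c, A, B, G, D, hc, hdet, rfl⟩ :=
    exists_eq_C_mul_lf_sq_mul_lf (hW.1 hr) hr0 hd (hnc _ hr)
  obtain ⟨g, hgX, hgY⟩ := exists_subst_eq_lf_of_det_ne_zero hdet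
  refine ⟨g, mem_mapAct_inv_iff.mpr ?_⟩
  have he : subst g (Xv ^ 2 * Yv) = (c * (A * D - B * G))⁻¹ • (C c * (lf A B ^ 2 * lf G D)) := by
    rw [map_mul, map_pow, hgX, hgY, ← smul_eq_C_mul, smul_smul,
      show (c * (A * D - B * G))⁻¹ * c = (A * D - B * G)⁻¹ by field_simp, mul_smul_comm]
  rw [he]
  exact W.smul_mem _ hr

lemma exists_eq_span_pair_of_mem (hW : IsLagrangian W) {x : P2} (hx : x ∈ W) (hx0 : x ≠ 0) :
    ∃ y ∈ Vcubic, y ∉ Submodule.span ℂ {x} ∧ omegaForm x y = 0 ∧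
      W = Submodule.span ℂ {x, y} := by
  obtain ⟨y, hy, hyx⟩ := exists_notMem_span_singleton hW.2.1 x
  exact ⟨y, hW.1 hy, hyx, hW.2.2 x hx y hy, eq_span_pair hW.2.1 hx hy hx0 hyx⟩

lemma exists_eq_span_Xv_pow_three (hW : IsLagrangian W) (hX : Xv ^ 3 ∈ W) :
    ∃ b₁ b₂ : ℂ, (b₁ ≠ 0 ∨ b₂ ≠ 0) ∧ W = Submodule.span ℂ {Xv ^ 3, cubic 0 b₁ b₂ 0} := by
  obtain ⟨y, hyV, hyX, hω, rfl⟩ :=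
    exists_eq_span_pair_of_mem hW hX (by simp [Xv_pow_three_eq_cubic, cubic_eq_zero_iff])
  obtain ⟨b₀, b₁, b₂, b₃, rfl⟩ := mem_Vcubic_iff.mp hyV
  obtain rfl : b₃ = 0 := by simpa [Xv_pow_three_eq_cubic, omegaForm_cubic] using hω
  have he : cubic b₀ b₁ b₂ 0 = b₀ • Xv ^ 3 + (1 : ℂ) • cubic 0 b₁ b₂ 0 := by
    simp [Xv_pow_three_eq_cubic, smul_cubic, cubic_add]
  refine ⟨b₁, b₂, ?_, by rw [he, span_pair_smul_add_smul _ one_ne_zero]⟩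
  contrapose! hyX
  exact Submodule.mem_span_singleton.mpr
    ⟨b₀, by simp [hyX.1, hyX.2, Xv_pow_three_eq_cubic, smul_cubic]⟩

lemma exists_eq_span_Xv_sq_mul_Yv (hW : IsLagrangian W) (hX : Xv ^ 2 * Yv ∈ W) :
    ∃ u₀ u₃ : ℂ, (u₀ ≠ 0 ∨ u₃ ≠ 0) ∧ W = Submodule.span ℂ {Xv ^ 2 * Yv, cubic u₀ 0 0 u₃} := by
  obtain ⟨y, hyV, hyX, hω, rfl⟩ :=
    exists_eq_span_pair_of_mem hW hX (by simp [Xv_sq_mul_Yv_eq_cubic, cubic_eq_zero_iff])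
  obtain ⟨u₀, u₁, u₂, u₃, rfl⟩ := mem_Vcubic_iff.mp hyV
  obtain rfl : u₂ = 0 := by simpa [Xv_sq_mul_Yv_eq_cubic, omegaForm_cubic] using hω
  have he : cubic u₀ u₁ 0 u₃ = u₁ • (Xv ^ 2 * Yv) + (1 : ℂ) • cubic u₀ 0 0 u₃ := by
    simp [Xv_sq_mul_Yv_eq_cubic, smul_cubic, cubic_add]
  refine ⟨u₀, u₃, ?_, by rw [he, span_pair_smul_add_smul _ one_ne_zero]⟩
  contrapose! hyX
  exact Submodule.mem_span_singleton.mpr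
    ⟨u₁, by simp [hyX.1, hyX.2, Xv_sq_mul_Yv_eq_cubic, smul_cubic]⟩

lemma span_Xv_pow_three_mem_slOrbit {b₁ b₂ : ℂ} (h : b₁ ≠ 0 ∨ b₂ ≠ 0) :
    Submodule.span ℂ {Xv ^ 3, cubic 0 b₁ b₂ 0} ∈ slOrbit L₁ ∨
      Submodule.span ℂ {Xv ^ 3, cubic 0 b₁ b₂ 0} ∈ slOrbit L₂ := by
  by_cases hb₂ : b₂ = 0
  · have hb₁ : b₁ ≠ 0 := h.resolve_right (not_not.mpr hb₂)
    refine Or.inl ⟨1, ?_⟩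
    have he : cubic 0 b₁ 0 0 = b₁ • cubic 0 1 0 0 := by simp [smul_cubic]
    rw [mapAct_one, L₁, hb₂, he, span_pair_smul_right hb₁, Xv_sq_mul_Yv_eq_cubic]
  · set s := b₁ / (2 * b₂)
    refine Or.inr ⟨sl2Mk 1 0 s 1 (by ring), ?_⟩
    have hX : subst (sl2Mk 1 0 s 1 (by ring)) (Xv ^ 3) = Xv ^ 3 := by
      simp [Xv_pow_three_eq_cubic, subst_cubic]
    have hY : subst (sl2Mk 1 0 s 1 (by ring)) (Xv * Yv ^ 2) = cubic (s ^ 2) (2 * s) 1 0 := by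
      rw [Xv_mul_Yv_sq_eq_cubic, subst_cubic, cubic_inj]
      exact ⟨by ring, by ring, by ring, by ring⟩
    have he : cubic 0 b₁ b₂ 0 = (-(b₂ * s ^ 2)) • Xv ^ 3 + b₂ • cubic (s ^ 2) (2 * s) 1 0 := by
      rw [Xv_pow_three_eq_cubic, smul_cubic, smul_cubic, cubic_add, cubic_inj]
      exact ⟨by ring, by simp only [s]; field_simp; ring, by ring, by ring⟩
    rw [L₂, mapAct_span_pair, hX, hY, he, span_pair_smul_add_smul _ hb₂]

lemma span_Xv_sq_mul_Yv_mem_slOrbit_L₃ {u₀ u₃ : ℂ} (h₀ : u₀ ≠ 0) (h₃ : u₃ ≠ 0) :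
    Submodule.span ℂ {Xv ^ 2 * Yv, cubic u₀ 0 0 u₃} ∈ slOrbit L₃ := by
  obtain ⟨t, ht⟩ := IsAlgClosed.exists_pow_nat_eq (u₀ / u₃) (n := 6) (by norm_num)
  have ht0 : t ≠ 0 := by rintro rfl; exact div_ne_zero h₀ h₃ (by rw [← ht]; ring)
  refine ⟨sl2Mk t 0 0 t⁻¹ (by field_simp; ring), ?_⟩
  have hX : subst (sl2Mk t 0 0 t⁻¹ (by field_simp; ring)) (Xv ^ 2 * Yv) = t • (Xv ^ 2 * Yv) := by
    rw [Xv_sq_mul_Yv_eq_cubic, subst_cubic, smul_cubic, cubic_inj]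
    exact ⟨by ring, by field_simp; ring, by ring, by ring⟩
  have hY : subst (sl2Mk t 0 0 t⁻¹ (by field_simp; ring)) (Xv ^ 3 + Yv ^ 3) =
      (u₃ * t ^ 3)⁻¹ • cubic u₀ 0 0 u₃ := by
    rw [Xv_pow_three_add_Yv_pow_three_eq_cubic, subst_cubic, smul_cubic, cubic_inj]
    field_simp at ht
    exact ⟨by field_simp; linear_combination ht, by ring, by ring, by field_simp; ring⟩
  rw [L₃, mapAct_span_pair, hX, hY, span_pair_smul_left ht0,
    span_pair_smul_right (inv_ne_zero (mul_ne_zero h₃ (pow_ne_zero 3 ht0)))]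

end NormalForms

section Classification

variable {W : Submodule ℂ P2}

lemma mem_slOrbit_L₁_or_L₂ (hW : IsLagrangian W) (hc : ∃ p ∈ W, IsPerfectCube p) :
    W ∈ slOrbit L₁ ∨ W ∈ slOrbit L₂ := by
  obtain ⟨g, hg⟩ := exists_Xv_pow_three_mem_mapAct hc
  obtain ⟨b₁, b₂, hb, he⟩ := exists_eq_span_Xv_pow_three (isLagrangian_mapAct g⁻¹ hW) hg
  exact (he ▸ span_Xv_pow_three_mem_slOrbit hb).imp (mem_slOrbit_of_mapAct_mem g⁻¹)
    (mem_slOrbit_of_mapAct_mem g⁻¹)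

lemma mem_slOrbit_L₃ (hW : IsLagrangian W) (hnc : ∀ p ∈ W, ¬IsPerfectCube p) :
    W ∈ slOrbit L₃ := by
  obtain ⟨g, hg⟩ := exists_Xv_sq_mul_Yv_mem_mapAct hW hnc
  obtain ⟨u₀, u₃, hu, he⟩ := exists_eq_span_Xv_sq_mul_Yv (isLagrangian_mapAct g⁻¹ hW) hg
  have hnc' : ∀ p ∈ mapAct g⁻¹ W, ¬IsPerfectCube p := fun p hp hcube =>
    hnc _ (mem_mapAct_inv_iff.mp hp) (isPerfectCube_subst g hcube)
  have hmem : cubic u₀ 0 0 u₃ ∈ mapAct g⁻¹ W := he ▸ Submodule.subset_span (by simp)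
  have hu₀ : u₀ ≠ 0 := by
    rintro rfl
    refine hnc' _ hmem ⟨-u₃, 1, 0, neg_ne_zero.mpr (hu.resolve_left (not_not.mpr rfl)),
      Or.inl one_ne_zero, ?_⟩
    rw [C_mul_lf_pow_three, cubic_inj]
    simp
  have hu₃ : u₃ ≠ 0 := by
    rintro rfl
    refine hnc' _ hmem ⟨u₀, 0, 1, hu₀, Or.inr one_ne_zero, ?_⟩
    rw [C_mul_lf_pow_three, cubic_inj]
    simp
  exact mem_slOrbit_of_mapAct_mem g⁻¹ (he ▸ span_Xv_sq_mul_Yv_mem_slOrbit_L₃ hu₀ hu₃)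

lemma isLagrangian_of_mem_slOrbit {L : Submodule ℂ P2} (hL : IsLagrangian L)
    (hW : W ∈ slOrbit L) : IsLagrangian W := by
  obtain ⟨g, rfl⟩ := hW
  exact isLagrangian_mapAct g hL

end Classification

/-- Every Lagrangian of `V` lies in the `SL(2,ℂ)`-orbit of exactly one of
`span{X³, X²Y}`, `span{X³, XY²}`, `span{X²Y, X³+Y³}`: the three orbits are pairwise
disjoint and their union is the set of all Lagrangians of `V`. -/
theorem statement5 :
    (∀ W : Submodule ℂ P2,
      IsLagrangian W ↔ (W ∈ slOrbit L₁ ∨ W ∈ slOrbit L₂ ∨ W ∈ slOrbit L₃)) ∧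
    (∀ W : Submodule ℂ P2, W ∈ slOrbit L₁ → W ∉ slOrbit L₂) ∧
    (∀ W : Submodule ℂ P2, W ∈ slOrbit L₁ → W ∉ slOrbit L₃) ∧
    (∀ W : Submodule ℂ P2, W ∈ slOrbit L₂ → W ∉ slOrbit L₃) := by
  have hX₁ : Xv ^ 3 ∈ L₁ := Submodule.subset_span (by simp)
  have hX₂ : Xv ^ 3 ∈ L₂ := Submodule.subset_span (by simp)
  refine ⟨fun W => ⟨fun hW => ?_, ?_⟩, fun W => notMem_slOrbit_L₂_of_mem_slOrbit_L₁,
    fun W => notMem_slOrbit_L₃_of_mem_slOrbit hX₁, fun W => notMem_slOrbit_L₃_of_mem_slOrbit hX₂⟩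
  · by_cases hc : ∃ p ∈ W, IsPerfectCube p
    · exact (mem_slOrbit_L₁_or_L₂ hW hc).imp_right Or.inl
    · push Not at hc
      exact Or.inr (Or.inr (mem_slOrbit_L₃ hW hc))
  · rintro (h | h | h)
    exacts [isLagrangian_of_mem_slOrbit isLagrangian_L₁ h,
      isLagrangian_of_mem_slOrbit isLagrangian_L₂ h, isLagrangian_of_mem_slOrbit isLagrangian_L₃ h]
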